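/- Along any solution of the error system ė_pⁱ = e_vⁱ, mᵢė_vⁱ = uⁱ with control law uⁱ = −Σ_{j∈Nᵢ} w_{ij}(e_vⁱ − e_vʲ) − Σ_{j∈Nᵢ} ∇_{e_pⁱ}Ṽ^{ij} − mᵢe_vⁱ, the energy function J = (1/2)Σ_{i=1}^N (Ṽⁱ + mᵢ e_vⁱᵀe_vⁱ), where Ṽⁱ = Σ_{j∈Nᵢ} Ṽ^{ij}, satisfies J̇ = −e_vᵀ(L⊗Iₙ)e_v − e_vᵀ(M⊗Iₙ)e_v ≤ 0, where e_v = (e_v¹ᵀ, …, e_vᴺᵀ)ᵀ, M = diag(m₁, …, m_N), and L = [l_{ij}] is the matrix with l_{ij} = −w_{ij} for i ≠ j and l_{ii} = Σ_{k≠i} w_{ik}. Moreover J̇ = 0 only if e_v¹ = e_v² = ⋯ = e_vᴺ = 0. -/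

import Mathlib

open Filter Topology Matrix
open scoped Kronecker RealInnerProductSpace

/-!
Since every `Ṽ^{ij}` is even and `Ṽ^{ij} = Ṽ^{ji}`, the gradients are antisymmetric:
`∇Ṽ^{ji}(e_pʲ - e_pⁱ) = -∇Ṽ^{ij}(e_pⁱ - e_pʲ)`. Hence the potential part of `J̇` collapses to
`Σᵢ ⟪Σⱼ ∇Ṽ^{ij}, e_vⁱ⟫`, which cancels exactly against the gradient term of the control law in
`Σᵢ ⟪e_vⁱ, uⁱ⟫`. What remains is `-Σᵢⱼ w_{ij}⟪e_vⁱ, e_vⁱ - e_vʲ⟫ - Σᵢ mᵢ‖e_vⁱ‖²`, the two quadratic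
forms of the statement; symmetrizing the first one turns it into `½ Σᵢⱼ w_{ij}‖e_vⁱ - e_vʲ‖² ≥ 0`.
-/

open Finset InnerProductSpace

section Calculus

variable {E : Type*} [NormedAddCommGroup E] [InnerProductSpace ℝ E]

theorem HasGradientAt.comp_hasDerivAt [CompleteSpace E] {f : E → ℝ} {g : E} {p : ℝ → E}
    {v : E} {t : ℝ} (hf : HasGradientAt f g (p t)) (hp : HasDerivAt p v t) :
    HasDerivAt (f ∘ p) ⟪g, v⟫ t :=
  hf.hasFDerivAt.comp_hasDerivAt t hp

theorem gradient_neg_of_even [CompleteSpace E] {f : E → ℝ} (heven : ∀ z, f (-z) = f z) {z : E}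
    (hf : DifferentiableAt ℝ f z) : gradient f (-z) = -gradient f z := by
  have hcomp : f ∘ Neg.neg = f := funext heven
  have hg : HasGradientAt f (gradient f z) (- -z) := by rw [neg_neg]; exact hf.hasGradientAt
  have h := hg.hasFDerivAt.comp (-z) (hasFDerivAt_id (-z)).neg
  rw [hcomp] at h
  refine (hasGradientAt_iff_hasFDerivAt.2 (h.congr_fderiv ?_)).gradient
  ext y
  simp

theorem hasDerivAt_mul_inner_self {x : ℝ → E} {m : ℝ} (hm : m ≠ 0) {u : E} {t : ℝ}
    (hx : HasDerivAt x (m⁻¹ • u) t) :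
    HasDerivAt (fun s => m * ⟪x s, x s⟫) (2 * ⟪x t, u⟫) t := by
  refine ((hx.inner ℝ hx).const_mul m).congr_deriv ?_
  rw [real_inner_smul_left, real_inner_smul_right, real_inner_comm u]
  field_simp
  ring

end Calculus

section WeightedLaplacian

variable {ι E : Type*} [Fintype ι] [NormedAddCommGroup E] [InnerProductSpace ℝ E]
  {w : ι → ι → ℝ} (v : ι → E)

theorem sum_laplacian_mul_inner [DecidableEq ι] {L : Matrix ι ι ℝ}
    (hL : ∀ i j, L i j = if i = j then ∑ k ∈ univ.erase i, w i k else -w i j) :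
    ∑ i, ∑ j, L i j * ⟪v i, v j⟫ = ∑ i, ∑ j, w i j * ⟪v i, v i - v j⟫ := by
  refine sum_congr rfl fun i _ => ?_
  rw [← add_sum_erase _ _ (mem_univ i), ← add_sum_erase _ _ (mem_univ i), hL, if_pos rfl,
    sub_self, inner_zero_right, mul_zero, zero_add, sum_mul, ← sum_add_distrib]
  refine sum_congr rfl fun j hj => ?_
  rw [hL, if_neg (ne_of_mem_erase hj).symm, inner_sub_right]
  ring

theorem sum_mul_inner_sub_nonneg (hw_symm : ∀ i j, w i j = w j i) (hw_nonneg : ∀ i j, 0 ≤ w i j) :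
    0 ≤ ∑ i, ∑ j, w i j * ⟪v i, v i - v j⟫ := by
  have hsym : ∑ i, ∑ j, w i j * ⟪v i, v i - v j⟫ = -∑ i, ∑ j, w i j * ⟪v j, v i - v j⟫ := by
    rw [sum_comm]
    simp only [← sum_neg_distrib, ← mul_neg, ← inner_neg_right, neg_sub, hw_symm]
  have hdouble : 2 * ∑ i, ∑ j, w i j * ⟪v i, v i - v j⟫
      = ∑ i, ∑ j, w i j * ⟪v i - v j, v i - v j⟫ := by
    rw [two_mul]
    nth_rewrite 2 [hsym]
    simp only [← sub_eq_add_neg, ← sum_sub_distrib, ← mul_sub, ← inner_sub_left]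
  have hsq : 0 ≤ ∑ i, ∑ j, w i j * ⟪v i - v j, v i - v j⟫ :=
    sum_nonneg fun i _ => sum_nonneg fun j _ => mul_nonneg (hw_nonneg i j) real_inner_self_nonneg
  linarith

theorem sum_mul_inner_self_eq_zero_iff {m : ι → ℝ} (hm : ∀ i, 0 < m i) :
    ∑ i, m i * ⟪v i, v i⟫ = 0 ↔ ∀ i, v i = 0 := by
  rw [sum_eq_zero_iff_of_nonneg fun i _ => mul_nonneg (hm i).le real_inner_self_nonneg]
  simp [(hm _).ne']

end WeightedLaplacian

section Kronecker

variable {ι κ : Type*} [Fintype ι] [Fintype κ] [DecidableEq κ] (v : ι → EuclideanSpace ℝ κ)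

theorem dotProduct_kronecker_one_mulVec (A : Matrix ι ι ℝ) :
    (fun p : ι × κ => v p.1 p.2) ⬝ᵥ (A ⊗ₖ (1 : Matrix κ κ ℝ)) *ᵥ (fun p => v p.1 p.2)
      = ∑ i, ∑ j, A i j * ⟪v i, v j⟫ := by
  simp only [dotProduct, mulVec, Fintype.sum_prod_type, kroneckerMap_apply, one_apply,
    PiLp.inner_apply, RCLike.inner_apply, conj_trivial, mul_sum, ite_mul, mul_ite, zero_mul,
    mul_zero, sum_ite_eq, mem_univ, if_true]
  refine sum_congr rfl fun i _ => ?_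
  rw [sum_comm]
  exact sum_congr rfl fun j _ => sum_congr rfl fun k _ => by ring

theorem dotProduct_diagonal_kronecker_one_mulVec [DecidableEq ι] (m : ι → ℝ) :
    (fun p : ι × κ => v p.1 p.2) ⬝ᵥ (diagonal m ⊗ₖ (1 : Matrix κ κ ℝ)) *ᵥ (fun p => v p.1 p.2)
      = ∑ i, m i * ⟪v i, v i⟫ := by
  simp [dotProduct_kronecker_one_mulVec, diagonal_apply]

end Kronecker

section PairPotential

variable {ι E : Type*} [Fintype ι] (G : SimpleGraph ι) [DecidableRel G.Adj]

theorem SimpleGraph.sum_sum_neighborFinset_comm {M : Type*} [AddCommMonoid M] (F : ι → ι → M) :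
    ∑ i, ∑ j ∈ G.neighborFinset i, F i j = ∑ i, ∑ j ∈ G.neighborFinset i, F j i :=
  sum_comm' (by simp [G.adj_comm])

variable [NormedAddCommGroup E] [InnerProductSpace ℝ E]

theorem sum_sum_neighborFinset_inner_sub_of_antisymm (g : ι → ι → E)
    (hg : ∀ i j, G.Adj i j → g j i = -g i j) (v : ι → E) :
    ∑ i, ∑ j ∈ G.neighborFinset i, ⟪g i j, v i - v j⟫
      = 2 * ∑ i, ⟪∑ j ∈ G.neighborFinset i, g i j, v i⟫ := by
  have hswap : ∑ i, ∑ j ∈ G.neighborFinset i, ⟪g i j, v j⟫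
      = -∑ i, ∑ j ∈ G.neighborFinset i, ⟪g i j, v i⟫ := by
    rw [G.sum_sum_neighborFinset_comm, ← sum_neg_distrib]
    refine sum_congr rfl fun i _ => ?_
    rw [← sum_neg_distrib]
    refine sum_congr rfl fun j hj => ?_
    rw [hg i j ((G.mem_neighborFinset i j).1 hj), inner_neg_left]
  simp only [inner_sub_right, sum_sub_distrib, hswap, sum_inner]
  ring

theorem hasDerivAt_sum_pair_potential [CompleteSpace E] (V : ι → ι → E → ℝ)
    (hV_symm : ∀ i j, V i j = V j i) (hV_even : ∀ i j z, V i j (-z) = V i j z)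
    {p : ι → ℝ → E} {v : ι → E} {t : ℝ}
    (hV_diff : ∀ i j, G.Adj i j → DifferentiableAt ℝ (V i j) (p i t - p j t))
    (hp : ∀ i, HasDerivAt (p i) (v i) t) :
    HasDerivAt (fun s => ∑ i, ∑ j ∈ G.neighborFinset i, V i j (p i s - p j s))
      (2 * ∑ i, ⟪∑ j ∈ G.neighborFinset i, gradient (V i j) (p i t - p j t), v i⟫) t := by
  have hgrad : ∀ i j, G.Adj i j →
      gradient (V j i) (p j t - p i t) = -gradient (V i j) (p i t - p j t) := by
    intro i j h
    rw [← hV_symm, ← neg_sub, gradient_neg_of_even (hV_even i j) (hV_diff i j h)]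
  rw [← sum_sum_neighborFinset_inner_sub_of_antisymm G
    (fun i j => gradient (V i j) (p i t - p j t)) hgrad]
  exact HasDerivAt.fun_sum fun i _ => HasDerivAt.fun_sum fun j hj =>
    (hV_diff i j ((G.mem_neighborFinset i j).1 hj)).hasGradientAt.comp_hasDerivAt
      ((hp i).sub (hp j))

end PairPotential

theorem energy_derivative_momentum_regulation_general
    (N n : ℕ)
    (m : Fin N → ℝ) (hm : ∀ i, 0 < m i)
    (G : SimpleGraph (Fin N)) [DecidableRel G.Adj]
    (w : Fin N → Fin N → ℝ)
    (hw_symm : ∀ i j, w i j = w j i)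
    (hw_nonneg : ∀ i j, 0 ≤ w i j)
    (hw_adj : ∀ i j, 0 < w i j ↔ G.Adj i j)
    -- the potential `Ṽ^{ij}`, viewed as a function of the relative position
    -- vector `e_pⁱ - e_pʲ`
    (V : Fin N → Fin N → EuclideanSpace ℝ (Fin n) → ℝ)
    (hV_symm : ∀ i j, V i j = V j i)
    (hV_rad : ∀ i j (z z' : EuclideanSpace ℝ (Fin n)), ‖z‖ = ‖z'‖ → V i j z = V i j z')
    (hV_diff : ∀ i j, G.Adj i j → Differentiable ℝ (V i j))
    (ep ev u : Fin N → ℝ → EuclideanSpace ℝ (Fin n))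
    (hu : ∀ i t, u i t =
      -(∑ j ∈ G.neighborFinset i, w i j • (ev i t - ev j t))
      - (∑ j ∈ G.neighborFinset i, gradient (V i j) (ep i t - ep j t))
      - m i • ev i t)
    (hep : ∀ i t, HasDerivAt (ep i) (ev i t) t)
    (hev : ∀ i t, HasDerivAt (ev i) ((m i)⁻¹ • u i t) t)
    (L : Matrix (Fin N) (Fin N) ℝ)
    (hL : ∀ i j, L i j = if i = j then ∑ k ∈ Finset.univ.erase i, w i k else -w i j)
    (J : ℝ → ℝ)
    (hJ : ∀ t, J t = (1 / 2) * ∑ i,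
      ((∑ j ∈ G.neighborFinset i, V i j (ep i t - ep j t)) + m i * ⟪ev i t, ev i t⟫))
    -- the stacked vector `e_v(t) ∈ ℝ^{Nn}`
    (e : ℝ → Fin N × Fin n → ℝ)
    (he : ∀ t p, e t p = ev p.1 t p.2) :
    ∀ t : ℝ,
      HasDerivAt J
        (-(e t ⬝ᵥ (L ⊗ₖ (1 : Matrix (Fin n) (Fin n) ℝ)).mulVec (e t))
          - e t ⬝ᵥ (Matrix.diagonal m ⊗ₖ (1 : Matrix (Fin n) (Fin n) ℝ)).mulVec (e t)) t ∧
      (-(e t ⬝ᵥ (L ⊗ₖ (1 : Matrix (Fin n) (Fin n) ℝ)).mulVec (e t))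
          - e t ⬝ᵥ (Matrix.diagonal m ⊗ₖ (1 : Matrix (Fin n) (Fin n) ℝ)).mulVec (e t) ≤ 0) ∧
      ((-(e t ⬝ᵥ (L ⊗ₖ (1 : Matrix (Fin n) (Fin n) ℝ)).mulVec (e t))
          - e t ⬝ᵥ (Matrix.diagonal m ⊗ₖ (1 : Matrix (Fin n) (Fin n) ℝ)).mulVec (e t) = 0) →
        ∀ i, ev i t = 0) := by
  intro t
  have hw_zero : ∀ i j, j ∉ G.neighborFinset i → w i j = 0 := fun i j hj =>
    le_antisymm (not_lt.1 fun h => hj ((G.mem_neighborFinset i j).2 ((hw_adj i j).1 h)))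
      (hw_nonneg i j)
  have hpot := hasDerivAt_sum_pair_potential G V hV_symm
    (fun i j z => hV_rad i j _ _ (norm_neg z)) (fun i j h => (hV_diff i j h).differentiableAt)
    (fun i => hep i t)
  have hkin := fun i => hasDerivAt_mul_inner_self (hm i).ne' (hev i t)
  have hcontrol : ∀ i, ⟪ev i t, u i t⟫ = -(∑ j, w i j * ⟪ev i t, ev i t - ev j t⟫)
      - ⟪∑ j ∈ G.neighborFinset i, gradient (V i j) (ep i t - ep j t), ev i t⟫
      - m i * ⟪ev i t, ev i t⟫ := by
    intro i
    rw [hu, ← sum_subset (subset_univ _) fun j _ hj => by rw [hw_zero i j hj, zero_mul]]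
    simp only [inner_sub_right, inner_neg_right, inner_sum, real_inner_smul_right, real_inner_comm]
  have hJ' : HasDerivAt J (-(∑ i, ∑ j, w i j * ⟪ev i t, ev i t - ev j t⟫)
      - ∑ i, m i * ⟪ev i t, ev i t⟫) t := by
    simp_rw [funext hJ, sum_add_distrib]
    refine ((hpot.add (HasDerivAt.fun_sum fun i _ => hkin i)).const_mul (1 / 2)).congr_deriv ?_
    simp only [hcontrol, sum_sub_distrib, sum_neg_distrib, ← mul_sum]
    ring
  rw [show e t = fun p => ev p.1 t p.2 from funext (he t),
    dotProduct_kronecker_one_mulVec (fun i => ev i t) L, sum_laplacian_mul_inner _ hL,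
    dotProduct_diagonal_kronecker_one_mulVec (fun i => ev i t) m]
  have hlap := sum_mul_inner_sub_nonneg (fun i => ev i t) hw_symm hw_nonneg
  have hkin_nonneg : 0 ≤ ∑ i, m i * ⟪ev i t, ev i t⟫ :=
    sum_nonneg fun i _ => mul_nonneg (hm i).le real_inner_self_nonneg
  exact ⟨hJ', by linarith,
    fun h0 => (sum_mul_inner_self_eq_zero_iff (fun i => ev i t) hm).1 (by linarith)⟩

/-- **Theorem 2 (energy decay).** Along any solution of the error system
`ė_pⁱ = e_vⁱ`, `mᵢė_vⁱ = uⁱ` with control law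
`uⁱ = -Σ_{j∈Nᵢ} w_{ij}(e_vⁱ - e_vʲ) - Σ_{j∈Nᵢ} ∇_{e_pⁱ}Ṽ^{ij} - mᵢe_vⁱ`,
the energy `J = ½Σᵢ(Ṽⁱ + mᵢ e_vⁱᵀe_vⁱ)` satisfies
`J̇ = -e_vᵀ(L⊗Iₙ)e_v - e_vᵀ(M⊗Iₙ)e_v ≤ 0`, and `J̇ = 0` only if all `e_vⁱ = 0`. -/
theorem energy_derivative_momentum_regulation
    (N n : ℕ)
    (m : Fin N → ℝ) (hm : ∀ i, 0 < m i)
    (G : SimpleGraph (Fin N)) [DecidableRel G.Adj] (hG : G.Connected)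
    (w : Fin N → Fin N → ℝ)
    (hw_symm : ∀ i j, w i j = w j i)
    (hw_nonneg : ∀ i j, 0 ≤ w i j)
    (hw_diag : ∀ i, w i i = 0)
    (hw_adj : ∀ i j, 0 < w i j ↔ G.Adj i j)
    -- the potential `Ṽ^{ij}`, viewed as a function of the relative position
    -- vector `e_pⁱ - e_pʲ`
    (V : Fin N → Fin N → EuclideanSpace ℝ (Fin n) → ℝ)
    (hV_symm : ∀ i j, V i j = V j i)
    (hV_rad : ∀ i j (z z' : EuclideanSpace ℝ (Fin n)), ‖z‖ = ‖z'‖ → V i j z = V i j z')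
    (hV_diff : ∀ i j, G.Adj i j → Differentiable ℝ (V i j))
    (hV_nonneg : ∀ i j z, 0 ≤ V i j z)
    (ep ev u : Fin N → ℝ → EuclideanSpace ℝ (Fin n))
    (hu : ∀ i t, u i t =
      -(∑ j ∈ G.neighborFinset i, w i j • (ev i t - ev j t))
      - (∑ j ∈ G.neighborFinset i, gradient (V i j) (ep i t - ep j t))
      - m i • ev i t)
    (hep : ∀ i t, HasDerivAt (ep i) (ev i t) t)
    (hev : ∀ i t, HasDerivAt (ev i) ((m i)⁻¹ • u i t) t)
    (L : Matrix (Fin N) (Fin N) ℝ)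
    (hL : ∀ i j, L i j = if i = j then ∑ k ∈ Finset.univ.erase i, w i k else -w i j)
    (J : ℝ → ℝ)
    (hJ : ∀ t, J t = (1 / 2) * ∑ i,
      ((∑ j ∈ G.neighborFinset i, V i j (ep i t - ep j t)) + m i * ⟪ev i t, ev i t⟫))
    -- the stacked vector `e_v(t) ∈ ℝ^{Nn}`
    (e : ℝ → Fin N × Fin n → ℝ)
    (he : ∀ t p, e t p = ev p.1 t p.2) :
    ∀ t : ℝ,
      HasDerivAt J
        (-(e t ⬝ᵥ (L ⊗ₖ (1 : Matrix (Fin n) (Fin n) ℝ)).mulVec (e t))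
          - e t ⬝ᵥ (Matrix.diagonal m ⊗ₖ (1 : Matrix (Fin n) (Fin n) ℝ)).mulVec (e t)) t ∧
      (-(e t ⬝ᵥ (L ⊗ₖ (1 : Matrix (Fin n) (Fin n) ℝ)).mulVec (e t))
          - e t ⬝ᵥ (Matrix.diagonal m ⊗ₖ (1 : Matrix (Fin n) (Fin n) ℝ)).mulVec (e t) ≤ 0) ∧
      ((-(e t ⬝ᵥ (L ⊗ₖ (1 : Matrix (Fin n) (Fin n) ℝ)).mulVec (e t))
          - e t ⬝ᵥ (Matrix.diagonal m ⊗ₖ (1 : Matrix (Fin n) (Fin n) ℝ)).mulVec (e t) = 0) →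
        ∀ i, ev i t = 0) :=
  energy_derivative_momentum_regulation_general N n m hm G w hw_symm hw_nonneg hw_adj V hV_symm
    hV_rad hV_diff ep ev u hu hep hev L hL J hJ e he
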